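/- For every integer w ≥ 2, E[ξ_w] = α₂/α + (α+α₁)·β/(α·(α(w−1)+β)); consequently there is a constant C > 0 such that |E[S_w] − (α₂/α)·w| ≤ C·log w for every integer w ≥ 2. -/

import Mathlib

/-!
For `w ≥ 2`, `ξ_w` takes only the values `0, 1, 2`, so its mean is `P(ξ_w = 1) + 2 P(ξ_w = 2)`,
which simplifies to `α₂/α + c/(α(w-1)+β)` with `c = (α+α₁)β/α`. Summing, `E[S_w] - (α₂/α)w` is
`2 - α₂/α` plus a sum of `c/(αk+β)` over `1 ≤ k < w`, and this sum is at most `c/α` times the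
harmonic number `H_{w-1} ≤ 1 + log w`.
-/

open MeasureTheory ProbabilityTheory Finset

section DiscreteExpectation

variable {Ω : Type*} [MeasurableSpace Ω] {μ : Measure Ω} {f : Ω → ℕ}

lemma ae_mem_of_sum_measureReal_eq_one [IsProbabilityMeasure μ] (hf : Measurable f)
    {s : Finset ℕ} (hs : ∑ k ∈ s, μ.real (f ⁻¹' {k}) = 1) : ∀ᵐ ω ∂μ, f ω ∈ s := by
  rw [sum_measureReal_preimage_singleton s fun k _ => hf (measurableSet_singleton k),
    measureReal_def, ENNReal.toReal_eq_one_iff,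
    ← prob_compl_eq_zero_iff (hf s.measurableSet)] at hs
  exact ae_iff.mpr hs

lemma integral_natCast_eq_sum_of_ae_mem [IsFiniteMeasure μ] (hf : Measurable f)
    {s : Finset ℕ} (hs : ∀ᵐ ω ∂μ, f ω ∈ s) :
    Integrable (fun ω => (f ω : ℝ)) μ ∧
      ∫ ω, (f ω : ℝ) ∂μ = ∑ k ∈ s, k * μ.real (f ⁻¹' {k}) := by
  have hfs : (fun ω => (f ω : ℝ)) =ᵐ[μ]
      fun ω => ∑ k ∈ s, (f ⁻¹' {k}).indicator (fun _ => (k : ℝ)) ω := by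
    filter_upwards [hs] with ω hω
    classical
    simp only [Set.indicator, Set.mem_preimage, Set.mem_singleton_iff]
    rw [sum_ite_eq, if_pos hω]
  have hint : ∀ k ∈ s, Integrable ((f ⁻¹' {k}).indicator fun _ => (k : ℝ)) μ :=
    fun k _ => (integrable_const _).indicator (hf (measurableSet_singleton k))
  refine ⟨(integrable_finsetSum s hint).congr hfs.symm, ?_⟩
  rw [integral_congr_ae hfs, integral_finsetSum s hint]
  refine sum_congr rfl fun k _ => ?_
  rw [integral_indicator_const _ (hf (measurableSet_singleton k)), smul_eq_mul, mul_comm]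

lemma integral_natCast_of_measureReal_zero_one_two [IsProbabilityMeasure μ] (hf : Measurable f)
    {p₀ p₁ p₂ : ℝ} (h₀ : μ.real (f ⁻¹' {0}) = p₀) (h₁ : μ.real (f ⁻¹' {1}) = p₁)
    (h₂ : μ.real (f ⁻¹' {2}) = p₂) (hp : p₀ + p₁ + p₂ = 1) :
    Integrable (fun ω => (f ω : ℝ)) μ ∧ ∫ ω, (f ω : ℝ) ∂μ = p₁ + 2 * p₂ := by
  have hs : ∀ᵐ ω ∂μ, f ω ∈ ({0, 1, 2} : Finset ℕ) :=
    ae_mem_of_sum_measureReal_eq_one hf (by simp [h₀, h₁, h₂, ← hp, add_assoc])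
  obtain ⟨hint, hE⟩ := integral_natCast_eq_sum_of_ae_mem hf hs
  exact ⟨hint, by simp [hE, h₁, h₂]⟩

lemma integral_natCast_of_measureReal_eq_div [IsProbabilityMeasure μ] (hf : Measurable f)
    {α₁ α₂ α β t : ℝ} (hα : α = α₁ + α₂) (hαpos : 0 < α) (hD : 0 < α * t + β)
    (h₀ : μ.real (f ⁻¹' {0}) = α₁ * t / (α * t + β))
    (h₁ : μ.real (f ⁻¹' {1}) = α₂ * t / (α * t + β))
    (h₂ : μ.real (f ⁻¹' {2}) = β / (α * t + β)) :
    Integrable (fun ω => (f ω : ℝ)) μ ∧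
      ∫ ω, (f ω : ℝ) ∂μ = α₂ / α + (α + α₁) * β / (α * (α * t + β)) := by
  obtain ⟨hint, hE⟩ := integral_natCast_of_measureReal_zero_one_two hf h₀ h₁ h₂
    (by rw [← add_div, ← add_div, div_eq_one_iff_eq hD.ne', hα]; ring)
  refine ⟨hint, ?_⟩
  rw [hE, mul_div_assoc', ← add_div, div_add_div _ _ hαpos.ne' (by positivity),
    div_eq_div_iff hD.ne' (by positivity), hα]
  ring

end DiscreteExpectation

lemma sum_range_inv_mul_add_le {a b : ℝ} (ha : 0 < a) (hb : 0 ≤ b) (n : ℕ) :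
    ∑ k ∈ range n, (a * (k + 1) + b)⁻¹ ≤ (1 + Real.log n) / a :=
  calc ∑ k ∈ range n, (a * (k + 1) + b)⁻¹
      ≤ ∑ k ∈ range n, a⁻¹ * ((k : ℝ) + 1)⁻¹ := by
        gcongr with k
        rw [← mul_inv]
        gcongr
        linarith
    _ = a⁻¹ * harmonic n := by simp [harmonic, mul_sum]
    _ ≤ (1 + Real.log n) / a := by
        rw [inv_mul_eq_div]
        gcongr
        exact harmonic_le_one_add_log n

lemma abs_sum_Icc_sub_mul_le {e : ℕ → ℝ} {m c a b : ℝ} (hc : 0 ≤ c) (ha : 0 < a) (hb : 0 ≤ b)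
    (he : ∀ i, 2 ≤ i → e i = m + c * (a * ((i : ℝ) - 1) + b)⁻¹) {w : ℕ} (hw : 1 ≤ w) :
    |∑ i ∈ Icc 1 w, e i - m * w| ≤ |e 1 - m| + c * (1 + Real.log w) / a := by
  obtain ⟨n, rfl⟩ := Nat.exists_eq_add_of_le' hw
  set H := ∑ k ∈ range n, (a * ((k : ℝ) + 1) + b)⁻¹
  have hsum : ∑ i ∈ Icc 1 (n + 1), e i - m * (n + 1 : ℕ) = (e 1 - m) + c * H := by
    rw [← Ico_add_one_right_eq_Icc, sum_Ico_eq_sum_range, Nat.add_sub_cancel, sum_range_succ',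
      sum_congr rfl fun k _ => he (1 + (k + 1)) (by omega), sum_add_distrib, ← mul_sum]
    push_cast
    simp only [sum_const, card_range, nsmul_eq_mul, H]
    ring_nf
  have hH : H ≤ (1 + Real.log (n + 1 : ℕ)) / a := by
    have hlog : Real.log n ≤ Real.log (n + 1 : ℕ) := by
      rcases n.eq_zero_or_pos with rfl | hn
      · simp
      · gcongr
        omega
    exact (sum_range_inv_mul_add_le ha hb n).trans (by gcongr)
  rw [hsum, mul_div_assoc]
  calc |e 1 - m + c * H| ≤ |e 1 - m| + c * H := by
        refine (abs_add_le _ _).trans_eq ?_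
        rw [abs_of_nonneg (mul_nonneg hc (sum_nonneg fun k _ => by positivity))]
    _ ≤ _ := by gcongr

lemma exists_pos_add_mul_log_le (A B : ℝ) :
    ∃ C > 0, ∀ w : ℕ, 2 ≤ w → A + B * Real.log w ≤ C * Real.log w := by
  have hlog2 : 0 < Real.log 2 := Real.log_pos one_lt_two
  refine ⟨|A| / Real.log 2 + |B| + 1, by positivity, fun w hw => ?_⟩
  have h2w : Real.log 2 ≤ Real.log w := Real.log_le_log two_pos (by exact_mod_cast hw)
  have hA : A ≤ |A| / Real.log 2 * Real.log w :=
    calc A ≤ |A| / Real.log 2 * Real.log 2 := by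
          rw [div_mul_cancel₀ _ hlog2.ne']
          exact le_abs_self A
      _ ≤ _ := by gcongr
  have hB : B * Real.log w ≤ |B| * Real.log w := by gcongr; exact le_abs_self B
  nlinarith

theorem stmt_7_general (α₁ α₂ β : ℝ) (hα₁ : 0 < α₁) (hα₂ : 0 < α₂) (hβ : 0 < β)
    (α : ℝ) (hα : α = α₁ + α₂)
    {Ω : Type*} [MeasurableSpace Ω] (μ : Measure Ω) [IsProbabilityMeasure μ]
    (ξ : ℕ → Ω → ℕ)
    (hξmeas : ∀ i, Measurable (ξ i))
    (hξ1 : ∀ᵐ ω ∂μ, ξ 1 ω = 2)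
    (hξ : ∀ w : ℕ, 2 ≤ w →
      (μ {ω | ξ w ω = 0}).toReal = α₁ * (w - 1) / (α * (w - 1) + β) ∧
      (μ {ω | ξ w ω = 1}).toReal = α₂ * (w - 1) / (α * (w - 1) + β) ∧
      (μ {ω | ξ w ω = 2}).toReal = β / (α * (w - 1) + β))
    (S : ℕ → Ω → ℕ)
    (hS : ∀ w ω, S w ω = ∑ i ∈ Finset.Icc 1 w, ξ i ω) :
    (∀ w : ℕ, 2 ≤ w →
      ∫ ω, (ξ w ω : ℝ) ∂μ = α₂ / α + (α + α₁) * β / (α * (α * (w - 1) + β))) ∧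
    ∃ C : ℝ, 0 < C ∧ ∀ w : ℕ, 2 ≤ w →
      |(∫ ω, (S w ω : ℝ) ∂μ) - (α₂ / α) * w| ≤ C * Real.log w := by
  have hαpos : 0 < α := hα ▸ add_pos hα₁ hα₂
  have hmean : ∀ w : ℕ, 2 ≤ w → Integrable (fun ω => (ξ w ω : ℝ)) μ ∧
      ∫ ω, (ξ w ω : ℝ) ∂μ = α₂ / α + (α + α₁) * β / (α * (α * (w - 1) + β)) := by
    intro w hw
    have hw1 : (1 : ℝ) ≤ w - 1 := by linarith [(Nat.ofNat_le_cast.mpr hw : (2 : ℝ) ≤ w)]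
    obtain ⟨h₀, h₁, h₂⟩ := hξ w hw
    exact integral_natCast_of_measureReal_eq_div (hξmeas w) hα hαpos (by positivity) h₀ h₁ h₂
  refine ⟨fun w hw => (hmean w hw).2, ?_⟩
  have hξ1_eq : (fun ω => (ξ 1 ω : ℝ)) =ᵐ[μ] fun _ => 2 := by
    filter_upwards [hξ1] with ω hω
    simp [hω]
  have hES : ∀ w, ∫ ω, (S w ω : ℝ) ∂μ = ∑ i ∈ Icc 1 w, ∫ ω, (ξ i ω : ℝ) ∂μ := by
    intro w
    simp only [hS, Nat.cast_sum]
    refine integral_finsetSum _ fun i hi => ?_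
    rcases (mem_Icc.mp hi).1.eq_or_lt with rfl | hi
    · exact (integrable_const 2).congr hξ1_eq.symm
    · exact (hmean i hi).1
  set c := (α + α₁) * β / α
  obtain ⟨C, hC, hCw⟩ := exists_pos_add_mul_log_le (|2 - α₂ / α| + c / α) (c / α)
  refine ⟨C, hC, fun w hw => ?_⟩
  have hdev := abs_sum_Icc_sub_mul_le (e := fun i => ∫ ω, (ξ i ω : ℝ) ∂μ) (m := α₂ / α) (c := c)
    (by positivity) hαpos hβ.le
    (fun i hi => by rw [(hmean i hi).2, ← div_div, ← div_eq_mul_inv]) (by omega : 1 ≤ w)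
  rw [integral_congr_ae hξ1_eq, integral_const, probReal_univ, one_smul] at hdev
  rw [hES]
  calc _ ≤ _ := hdev
    _ = |2 - α₂ / α| + c / α + c / α * Real.log w := by ring
    _ ≤ C * Real.log w := hCw w hw

/-- `E[ξ_w] = α₂/α + (α+α₁)β/(α(α(w-1)+β))` for `w ≥ 2`, and consequently
`|E[S_w] - (α₂/α)w| ≤ C log w` for some constant `C > 0`. -/
theorem stmt_7 (α₁ α₂ β : ℝ) (hα₁ : 0 < α₁) (hα₂ : 0 < α₂) (hβ : 0 < β)
    (α : ℝ) (hα : α = α₁ + α₂)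
    (x : ℕ → ℝ) (hx1 : x 1 = 1 / (α + β + 1))
    (hxrec : ∀ w : ℕ, 2 ≤ w →
      x w = (α * (w - 1) + β) / (α * w + β + 1) * x (w - 1))
    {Ω : Type*} [MeasurableSpace Ω] (μ : Measure Ω) [IsProbabilityMeasure μ]
    (W : Ω → ℕ) (ξ : ℕ → Ω → ℕ)
    (hWmeas : Measurable W) (hξmeas : ∀ i, Measurable (ξ i))
    (hW : ∀ w : ℕ, 1 ≤ w → (μ {ω | W ω = w}).toReal = x w)
    (hξ1 : ∀ᵐ ω ∂μ, ξ 1 ω = 2)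
    (hindep : iIndepFun
      (fun i : ℕ => if i = 0 then W else ξ (i + 1)) μ)
    (hξ : ∀ w : ℕ, 2 ≤ w →
      (μ {ω | ξ w ω = 0}).toReal = α₁ * (w - 1) / (α * (w - 1) + β) ∧
      (μ {ω | ξ w ω = 1}).toReal = α₂ * (w - 1) / (α * (w - 1) + β) ∧
      (μ {ω | ξ w ω = 2}).toReal = β / (α * (w - 1) + β))
    (S : ℕ → Ω → ℕ)
    (hS : ∀ w ω, S w ω = ∑ i ∈ Finset.Icc 1 w, ξ i ω) :
    (∀ w : ℕ, 2 ≤ w →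
      ∫ ω, (ξ w ω : ℝ) ∂μ = α₂ / α + (α + α₁) * β / (α * (α * (w - 1) + β))) ∧
    ∃ C : ℝ, 0 < C ∧ ∀ w : ℕ, 2 ≤ w →
      |(∫ ω, (S w ω : ℝ) ∂μ) - (α₂ / α) * w| ≤ C * Real.log w :=
  stmt_7_general α₁ α₂ β hα₁ hα₂ hβ α hα μ ξ hξmeas hξ1 hξ S hS
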